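/- Let g be a Lie triple system over a field F with char F ≠ 2, 3 and N : g → g a Nijenhuis operator. Define ω(x,y,z) := [Nx,y,z] + [x,Ny,z] + [x,y,Nz] − N[x,y,z]. Then for every λ ∈ F the bracket [x,y,z]_λ := [x,y,z] + λ·ω(x,y,z) makes g a Lie triple system, and φ_λ := id + λN is a homomorphism of Lie triple systems from (g, [·,·,·]_λ) to (g, [·,·,·]), i.e. φ_λ([x,y,z]_λ) = [φ_λ(x), φ_λ(y), φ_λ(z)] for all x,y,z ∈ g; thus the deformation generated by ω is trivial. -/

import Mathlib

/-!
Write `ω` for the Nijenhuis bracket and `φ_λ = 1 + λN`. Expanding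
`φ_λ([x,y,z] + λω(x,y,z)) = [φ_λ x, φ_λ y, φ_λ z]` in powers of `λ` leaves exactly the
two Nijenhuis identities, so `φ_λ` is a homomorphism. Skew-symmetry and the cyclic identity are
linear in the bracket. The fundamental identity of `[·,·,·] + λω` has a `λ`-coefficient that
vanishes for every linear `N` and a `λ²`-coefficient `D`, the defect of `ω` itself. A
homomorphism maps the fundamental defect of its source to that of its target, which is zero,
so `(1 + λN)(λ²D) = 0`; adding the cases `λ = 1` and `λ = -1` gives `2D = 0`.
-/

/-- `N` is a Nijenhuis operator for the Lie triple system bracket `t`. -/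
def IsNijenhuis {F : Type*} [Field F] {g : Type*} [AddCommGroup g] [Module F g]
    (t : g →ₗ[F] g →ₗ[F] g →ₗ[F] g) (N : Module.End F g) : Prop :=
  (∀ x y z : g, t (N x) (N y) (N z) = 0) ∧
  (∀ x y z : g,
    N (N (t x y z)) =
      N (t (N x) y z) + N (t x (N y) z) + N (t x y (N z)) -
        t (N x) (N y) z - t (N x) y (N z) - t x (N y) (N z))

section CommRing

variable {R M : Type*} [CommRing R] [AddCommGroup M] [Module R M]

structure IsLieTripleSystem (t : M →ₗ[R] M →ₗ[R] M →ₗ[R] M) : Prop where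
  self_left : ∀ x y, t x x y = 0
  cyclic : ∀ x y z, t x y z + t y z x + t z x y = 0
  fundamental : ∀ x y a b c,
    t x y (t a b c) = t (t x y a) b c + t a (t x y b) c + t a b (t x y c)

def fundamentalDefect (s u : M →ₗ[R] M →ₗ[R] M →ₗ[R] M) (x y a b c : M) : M :=
  s x y (u a b c) - u (s x y a) b c - u a (s x y b) c - u a b (s x y c)

theorem fundamentalDefect_eq_zero_iff (t : M →ₗ[R] M →ₗ[R] M →ₗ[R] M) (x y a b c : M) :
    fundamentalDefect t t x y a b c = 0 ↔
      t x y (t a b c) = t (t x y a) b c + t a (t x y b) c + t a b (t x y c) := by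
  rw [fundamentalDefect, sub_sub, sub_sub, sub_eq_zero, add_assoc]

theorem fundamentalDefect_add_smul (s u : M →ₗ[R] M →ₗ[R] M →ₗ[R] M) (c : R)
    (x y a b d : M) :
    fundamentalDefect (s + c • u) (s + c • u) x y a b d =
      fundamentalDefect s s x y a b d +
        c • (fundamentalDefect s u x y a b d + fundamentalDefect u s x y a b d) +
        c ^ 2 • fundamentalDefect u u x y a b d := by
  simp only [fundamentalDefect, LinearMap.add_apply, LinearMap.smul_apply, map_add, map_smul]
  module

theorem map_fundamentalDefect {s t : M →ₗ[R] M →ₗ[R] M →ₗ[R] M} {φ : M →ₗ[R] M}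
    (hφ : ∀ x y z, φ (s x y z) = t (φ x) (φ y) (φ z)) (x y a b c : M) :
    φ (fundamentalDefect s s x y a b c) =
      fundamentalDefect t t (φ x) (φ y) (φ a) (φ b) (φ c) := by
  simp only [fundamentalDefect, map_sub, hφ]

namespace IsLieTripleSystem

variable {t : M →ₗ[R] M →ₗ[R] M →ₗ[R] M}

theorem swap (ht : IsLieTripleSystem t) (x y z : M) : t y x z = -t x y z := by
  have h := ht.self_left (x + y) z
  simp only [map_add, LinearMap.add_apply, ht.self_left, zero_add, add_zero] at h
  exact eq_neg_of_add_eq_zero_left h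

theorem add_smul {u : M →ₗ[R] M →ₗ[R] M →ₗ[R] M} (ht : IsLieTripleSystem t)
    (hu : IsLieTripleSystem u)
    (htu : ∀ x y a b c, fundamentalDefect t u x y a b c + fundamentalDefect u t x y a b c = 0)
    (c : R) : IsLieTripleSystem (t + c • u) where
  self_left x y := by simp [ht.self_left, hu.self_left]
  cyclic x y z := by
    simp only [LinearMap.add_apply, LinearMap.smul_apply]
    linear_combination (norm := module) ht.cyclic x y z + c • hu.cyclic x y z
  fundamental x y a b d := by
    rw [← fundamentalDefect_eq_zero_iff, fundamentalDefect_add_smul, htu,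
      (fundamentalDefect_eq_zero_iff t ..).2 (ht.fundamental ..),
      (fundamentalDefect_eq_zero_iff u ..).2 (hu.fundamental ..)]
    simp

end IsLieTripleSystem

def nijenhuisBracket (t : M →ₗ[R] M →ₗ[R] M →ₗ[R] M) (N : Module.End R M) :
    M →ₗ[R] M →ₗ[R] M →ₗ[R] M :=
  t ∘ₗ N + t.compl₂ N + t.compr₂ (LinearMap.lcomp R M N) -
    t.compr₂ (LinearMap.llcomp R M M M N)

@[simp]
theorem nijenhuisBracket_apply (t : M →ₗ[R] M →ₗ[R] M →ₗ[R] M) (N : Module.End R M)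
    (x y z : M) :
    nijenhuisBracket t N x y z = t (N x) y z + t x (N y) z + t x y (N z) - N (t x y z) :=
  rfl

variable {t : M →ₗ[R] M →ₗ[R] M →ₗ[R] M} (N : Module.End R M)

theorem IsLieTripleSystem.nijenhuisBracket_self_left (ht : IsLieTripleSystem t) (x y : M) :
    nijenhuisBracket t N x x y = 0 := by
  rw [nijenhuisBracket_apply, ht.swap x (N x), ht.self_left, ht.self_left, map_zero]
  abel

theorem IsLieTripleSystem.nijenhuisBracket_cyclic (ht : IsLieTripleSystem t) (x y z : M) :
    nijenhuisBracket t N x y z + nijenhuisBracket t N y z x + nijenhuisBracket t N z x y = 0 := by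
  have hN := congrArg N (ht.cyclic x y z)
  simp only [map_add, map_zero] at hN
  simp only [nijenhuisBracket_apply]
  linear_combination (norm := module)
    ht.cyclic (N x) y z + ht.cyclic x (N y) z + ht.cyclic x y (N z) - hN

theorem IsLieTripleSystem.fundamentalDefect_nijenhuisBracket_add_swap (ht : IsLieTripleSystem t)
    (x y a b c : M) :
    fundamentalDefect t (nijenhuisBracket t N) x y a b c +
      fundamentalDefect (nijenhuisBracket t N) t x y a b c = 0 := by
  have hN := congrArg N (ht.fundamental x y a b c)
  simp only [map_add] at hN
  simp only [fundamentalDefect, nijenhuisBracket_apply, map_add, map_sub, LinearMap.add_apply,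
    LinearMap.sub_apply]
  linear_combination (norm := module) ht.fundamental x y a b (N c) +
    ht.fundamental x y a (N b) c + ht.fundamental x y (N a) b c +
    ht.fundamental x (N y) a b c + ht.fundamental (N x) y a b c - hN

end CommRing

section Field

variable {F g : Type*} [Field F] [AddCommGroup g] [Module F g]
  {t : g →ₗ[F] g →ₗ[F] g →ₗ[F] g} {N : Module.End F g}

theorem IsNijenhuis.map_add_smul_nijenhuisBracket (hN : IsNijenhuis t N) (c : F) (x y z : g) :
    (1 + c • N) ((t + c • nijenhuisBracket t N) x y z) =
      t ((1 + c • N) x) ((1 + c • N) y) ((1 + c • N) z) := by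
  simp only [LinearMap.add_apply, LinearMap.smul_apply, Module.End.one_apply,
    nijenhuisBracket_apply, map_add, map_smul, map_sub]
  linear_combination (norm := module) (-c ^ 2) • hN.2 x y z - c ^ 3 • hN.1 x y z

theorem IsNijenhuis.isLieTripleSystem_nijenhuisBracket (hN : IsNijenhuis t N)
    (ht : IsLieTripleSystem t) (h2 : (2 : F) ≠ 0) : IsLieTripleSystem (nijenhuisBracket t N) where
  self_left := ht.nijenhuisBracket_self_left N
  cyclic := ht.nijenhuisBracket_cyclic N
  fundamental x y a b c := by
    rw [← fundamentalDefect_eq_zero_iff]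
    set D := fundamentalDefect (nijenhuisBracket t N) (nijenhuisBracket t N) x y a b c
    have hφ (e : F) : (1 + e • N) (e ^ 2 • D) = 0 := by
      have hexpand := fundamentalDefect_add_smul t (nijenhuisBracket t N) e x y a b c
      rw [ht.fundamentalDefect_nijenhuisBracket_add_swap, (fundamentalDefect_eq_zero_iff t ..).2
        (ht.fundamental ..), smul_zero, zero_add, zero_add] at hexpand
      rw [← hexpand, map_fundamentalDefect (hN.map_add_smul_nijenhuisBracket e),
        fundamentalDefect_eq_zero_iff]
      exact ht.fundamental ..
    have hplus := hφ 1
    have hminus := hφ (-1)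
    simp only [LinearMap.add_apply, LinearMap.smul_apply, Module.End.one_apply, map_smul]
      at hplus hminus
    have h2D : (2 : F) • D = 0 := by linear_combination (norm := module) hplus + hminus
    exact (smul_eq_zero.mp h2D).resolve_left h2

end Field

theorem nijenhuis_gives_trivial_deformation_general {F : Type*} [Field F]
    (hchar2 : (2 : F) ≠ 0)
    {g : Type*} [AddCommGroup g] [Module F g]
    (t : g →ₗ[F] g →ₗ[F] g →ₗ[F] g)
    (hskew : ∀ x y : g, t x x y = 0)
    (hjac : ∀ x y z : g, t x y z + t y z x + t z x y = 0)
    (hfund : ∀ x y a b c : g,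
      t x y (t a b c) = t (t x y a) b c + t a (t x y b) c + t a b (t x y c))
    (N : Module.End F g) (hN : IsNijenhuis t N)
    (ω : g → g → g → g)
    (hω : ∀ x y z : g,
      ω x y z = t (N x) y z + t x (N y) z + t x y (N z) - N (t x y z)) :
    ∀ (lam : F) (b : g → g → g → g),
      (∀ x y z : g, b x y z = t x y z + lam • ω x y z) →
      ((∀ x y : g, b x x y = 0) ∧
       (∀ x y z : g, b x y z + b y z x + b z x y = 0) ∧
       (∀ x1 x2 y1 y2 y3 : g,
         b x1 x2 (b y1 y2 y3) =
           b (b x1 x2 y1) y2 y3 + b y1 (b x1 x2 y2) y3 + b y1 y2 (b x1 x2 y3)) ∧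
       -- φ_λ = id + λN is a homomorphism from (g, b) to (g, [·,·,·]):
       (∀ x y z : g,
         b x y z + lam • N (b x y z) =
           t (x + lam • N x) (y + lam • N y) (z + lam • N z))) := by
  intro lam b hb
  obtain rfl : b = fun x y z => (t + lam • nijenhuisBracket t N) x y z := by
    funext x y z
    rw [hb, hω]
    rfl
  have ht : IsLieTripleSystem t := ⟨hskew, hjac, hfund⟩
  have hdeformed := ht.add_smul (hN.isLieTripleSystem_nijenhuisBracket ht hchar2)
    (ht.fundamentalDefect_nijenhuisBracket_add_swap N) lam
  refine ⟨hdeformed.self_left, hdeformed.cyclic, hdeformed.fundamental, fun x y z => ?_⟩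
  simpa only [LinearMap.add_apply, LinearMap.smul_apply, Module.End.one_apply] using
    hN.map_add_smul_nijenhuisBracket lam x y z

theorem nijenhuis_gives_trivial_deformation {F : Type*} [Field F]
    (hchar2 : (2 : F) ≠ 0) (hchar3 : (3 : F) ≠ 0)
    {g : Type*} [AddCommGroup g] [Module F g]
    (t : g →ₗ[F] g →ₗ[F] g →ₗ[F] g)
    (hskew : ∀ x y : g, t x x y = 0)
    (hjac : ∀ x y z : g, t x y z + t y z x + t z x y = 0)
    (hfund : ∀ x y a b c : g,
      t x y (t a b c) = t (t x y a) b c + t a (t x y b) c + t a b (t x y c))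
    (N : Module.End F g) (hN : IsNijenhuis t N)
    (ω : g → g → g → g)
    (hω : ∀ x y z : g,
      ω x y z = t (N x) y z + t x (N y) z + t x y (N z) - N (t x y z)) :
    ∀ (lam : F) (b : g → g → g → g),
      (∀ x y z : g, b x y z = t x y z + lam • ω x y z) →
      ((∀ x y : g, b x x y = 0) ∧
       (∀ x y z : g, b x y z + b y z x + b z x y = 0) ∧
       (∀ x1 x2 y1 y2 y3 : g,
         b x1 x2 (b y1 y2 y3) =
           b (b x1 x2 y1) y2 y3 + b y1 (b x1 x2 y2) y3 + b y1 y2 (b x1 x2 y3)) ∧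
       -- φ_λ = id + λN is a homomorphism from (g, b) to (g, [·,·,·]):
       (∀ x y z : g,
         b x y z + lam • N (b x y z) =
           t (x + lam • N x) (y + lam • N y) (z + lam • N z))) :=
  nijenhuis_gives_trivial_deformation_general hchar2 t hskew hjac hfund N hN ω hω
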